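/- arXiv:2108.08392 — 8 statements merged into one kernel-verified Lean document; each statement's English description precedes it below -/
import Mathlib

section
/- The orthogonal projection P commutes with the inverse of the constraint inertia matrix: P M_c⁻¹ = M_c⁻¹ P = P M_c⁻¹ P. -/
open Matrix

/-
`M_c⁻¹` commutes with `P` because `M_c` does: `P` annihilates `1 - P` on both sides, so
`P M_c = P M P = M_c P`. The inverse of anything commuting with `P` commutes with `P`, and then
`M_c⁻¹ P = M_c⁻¹ P P = P M_c⁻¹ P`.
-/

theorem Commute.ringInverse_right {M₀ : Type*} [MonoidWithZero M₀] {a b : M₀}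
    (h : Commute a b) : Commute a (Ring.inverse b) := by
  by_cases hb : IsUnit b
  · obtain ⟨u, rfl⟩ := hb
    rw [Ring.inverse_unit]
    exact h.units_inv_right
  · rw [Ring.inverse_non_unit b hb]
    exact Commute.zero_right a

theorem Matrix.commute_nonsing_inv_right {n α : Type*} [Fintype n] [DecidableEq n] [CommRing α]
    {A B : Matrix n n α} (h : Commute A B) : Commute A B⁻¹ := by
  rw [nonsing_inv_eq_ringInverse]
  exact h.ringInverse_right

namespace IsIdempotentElem

theorem commute_mul_mul_self {S : Type*} [Semigroup S] {p : S} (hp : IsIdempotentElem p) (m : S) :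
    Commute p (p * m * p) := by
  simp only [Commute, SemiconjBy, ← mul_assoc, hp.eq]
  rw [mul_assoc _ p p, hp.eq]

theorem mul_eq_mul_mul_of_commute {S : Type*} [Semigroup S] {p a : S} (hp : IsIdempotentElem p)
    (h : Commute p a) : a * p = p * a * p := by
  rw [mul_assoc, ← h.eq, ← mul_assoc, hp.eq]

theorem commute_mul_mul_add_smul_one_sub {R A : Type*} [CommSemiring R] [Ring A] [Algebra R A]
    {p : A} (hp : IsIdempotentElem p) (m : A) (c : R) : Commute p (p * m * p + c • (1 - p)) :=
  (hp.commute_mul_mul_self m).add_right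
    (((Commute.one_right p).sub_right (Commute.refl p)).smul_right c)

end IsIdempotentElem

theorem P_commutes_Mc_inv_general {n : ℕ}
    (M P : Matrix (Fin n) (Fin n) ℝ)
    (hP : P * P = P) (ν : ℝ)
    (Mc : Matrix (Fin n) (Fin n) ℝ) (hMc : Mc = P * M * P + ν • (1 - P)) :
    P * Mc⁻¹ = Mc⁻¹ * P ∧ Mc⁻¹ * P = P * Mc⁻¹ * P := by
  have hP' : IsIdempotentElem P := hP
  have hcomm : Commute P Mc⁻¹ :=
    Matrix.commute_nonsing_inv_right (hMc ▸ hP'.commute_mul_mul_add_smul_one_sub M ν)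
  exact ⟨hcomm.eq, hP'.mul_eq_mul_mul_of_commute hcomm⟩

theorem P_commutes_Mc_inv {n : ℕ}
    (M P : Matrix (Fin n) (Fin n) ℝ) (hM : M.PosDef)
    (hP : P * P = P) (hPt : Pᵀ = P) (ν : ℝ) (hν : 0 < ν)
    (Mc : Matrix (Fin n) (Fin n) ℝ) (hMc : Mc = P * M * P + ν • (1 - P)) :
    P * Mc⁻¹ = Mc⁻¹ * P ∧ Mc⁻¹ * P = P * Mc⁻¹ * P :=
  P_commutes_Mc_inv_general M P hP ν Mc hMc
end

section
/- P M_c⁻¹ equals the Moore–Penrose pseudoinverse of M_o = P M P; that is, M_c⁻¹ P = P M_c⁻¹ P = (P M P)⁺. -/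
/-!
Because `P` is an orthogonal projection, `M_c = Pᵀ M P + (1 - P)ᵀ (ν • 1) (1 - P)`, which is
positive definite as `P x` and `(1 - P) x` cannot both vanish for `x ≠ 0`. Moreover
`M_c P = P M_c = P M P`, so `P` commutes with `M_c⁻¹`, and `X = P M_c⁻¹` satisfies
`M_o X = X M_o = P`. The Penrose conditions then reduce to `P` being a symmetric idempotent
that fixes `M_o` and `X`.
-/

open Matrix

/-- The Moore–Penrose pseudoinverse conditions: `X` is the pseudoinverse of `A`. -/
def IsMoorePenroseInv {n : ℕ} (A X : Matrix (Fin n) (Fin n) ℝ) : Prop :=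
  A * X * A = A ∧ X * A * X = X ∧ (A * X)ᵀ = A * X ∧ (X * A)ᵀ = X * A

section IdempotentCompression

variable {R A : Type*} [CommSemiring R] [Ring A] [Algebra R A] {P : A}

lemma IsIdempotentElem.mul_mul_self_add_smul_one_sub_mul_self (hP : IsIdempotentElem P)
    (M : A) (ν : R) : (P * M * P + ν • (1 - P)) * P = P * M * P := by
  rw [add_mul, smul_mul_assoc, sub_mul, one_mul, hP.eq, sub_self, smul_zero, add_zero,
    mul_assoc, hP.eq]

lemma IsIdempotentElem.self_mul_mul_mul_self_add_smul_one_sub (hP : IsIdempotentElem P)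
    (M : A) (ν : R) : P * (P * M * P + ν • (1 - P)) = P * M * P := by
  rw [mul_add, mul_smul_comm, mul_sub, mul_one, hP.eq, sub_self, smul_zero, add_zero,
    ← mul_assoc, ← mul_assoc, hP.eq]

end IdempotentCompression

namespace Matrix

variable {ι R : Type*} [Fintype ι] [DecidableEq ι]

lemma PosDef.conjTranspose_mul_mul_add_one_sub [CommRing R] [PartialOrder R] [StarRing R]
    [StarOrderedRing R] {A B : Matrix ι ι R} (hA : A.PosDef) (hB : B.PosDef) (P : Matrix ι ι R) :
    (Pᴴ * A * P + (1 - P)ᴴ * B * (1 - P)).PosDef := by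
  refine .of_dotProduct_mulVec_pos ((isHermitian_conjTranspose_mul_mul P hA.1).add
    (isHermitian_conjTranspose_mul_mul _ hB.1)) fun x hx => ?_
  have quad (C D : Matrix ι ι R) :
      star x ⬝ᵥ ((Dᴴ * C * D) *ᵥ x) = star (D *ᵥ x) ⬝ᵥ (C *ᵥ (D *ᵥ x)) := by
    simp only [star_mulVec, dotProduct_mulVec, vecMul_vecMul]
  rw [add_mulVec, dotProduct_add, quad, quad]
  by_cases hPx : P *ᵥ x = 0
  · have hQx : (1 - P) *ᵥ x ≠ 0 := by simpa [sub_mulVec, hPx] using hx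
    exact add_pos_of_nonneg_of_pos (hA.posSemidef.dotProduct_mulVec_nonneg _)
      (hB.dotProduct_mulVec_pos hQx)
  · exact add_pos_of_pos_of_nonneg (hA.dotProduct_mulVec_pos hPx)
      (hB.posSemidef.dotProduct_mulVec_nonneg _)

/-- Holds also for singular `A`, where `A⁻¹ = 0`. -/
lemma Commute.matrix_inv_right [CommRing R] {P A : Matrix ι ι R} (h : Commute P A) :
    Commute P A⁻¹ := by
  by_cases hA : IsUnit A.det
  · calc P * A⁻¹ = A⁻¹ * (A * P) * A⁻¹ := by
          rw [← Matrix.mul_assoc, nonsing_inv_mul _ hA, Matrix.one_mul]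
      _ = A⁻¹ * (P * A) * A⁻¹ := by rw [h.eq]
      _ = A⁻¹ * P := by
          rw [Matrix.mul_assoc, Matrix.mul_assoc, mul_nonsing_inv _ hA, Matrix.mul_one]
  · rw [nonsing_inv_apply_not_isUnit A hA]
    exact Commute.zero_right P

end Matrix

lemma isMoorePenroseInv_mul_inv_of_commute {n : ℕ} {A P : Matrix (Fin n) (Fin n) ℝ}
    (hA : IsUnit A.det) (hP : P * P = P) (hPt : Pᵀ = P) (h : Commute P A) :
    IsMoorePenroseInv (A * P) (P * A⁻¹) := by
  have hAX : A * P * (P * A⁻¹) = P := by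
    rw [Matrix.mul_assoc, ← Matrix.mul_assoc P, hP, h.matrix_inv_right.eq, ← Matrix.mul_assoc,
      mul_nonsing_inv _ hA, Matrix.one_mul]
  have hXA : P * A⁻¹ * (A * P) = P := by
    rw [Matrix.mul_assoc, ← Matrix.mul_assoc A⁻¹, nonsing_inv_mul _ hA, Matrix.one_mul, hP]
  refine ⟨?_, ?_, ?_, ?_⟩
  · rw [hAX, ← Matrix.mul_assoc, h.eq, Matrix.mul_assoc, hP]
  · rw [hXA, ← Matrix.mul_assoc, hP]
  · rw [hAX, hPt]
  · rw [hXA, hPt]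

theorem P_Mc_inv_eq_pseudoinverse {n : ℕ}
    (M P : Matrix (Fin n) (Fin n) ℝ) (hM : M.PosDef)
    (hP : P * P = P) (hPt : Pᵀ = P) (ν : ℝ) (hν : 0 < ν)
    (Mc Mo : Matrix (Fin n) (Fin n) ℝ)
    (hMc : Mc = P * M * P + ν • (1 - P)) (hMo : Mo = P * M * P) :
    IsMoorePenroseInv Mo (P * Mc⁻¹) ∧
      P * Mc⁻¹ = Mc⁻¹ * P ∧ Mc⁻¹ * P = P * Mc⁻¹ * P := by
  have hPh : Pᴴ = P := by rwa [conjTranspose_eq_transpose_of_trivial]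
  have hMc_posDef : Mc.PosDef := by
    have h := hM.conjTranspose_mul_mul_add_one_sub (PosDef.one.smul hν) P
    rwa [conjTranspose_sub, conjTranspose_one, hPh, Matrix.mul_smul, Matrix.mul_one,
      Matrix.smul_mul, IsIdempotentElem.one_sub hP, ← hMc] at h
  have hMcP : Mc * P = Mo := by
    rw [hMc, hMo, IsIdempotentElem.mul_mul_self_add_smul_one_sub_mul_self hP]
  have hPMc : P * Mc = Mo := by
    rw [hMc, hMo, IsIdempotentElem.self_mul_mul_mul_self_add_smul_one_sub hP]
  have hcomm : Commute P Mc := hPMc.trans hMcP.symm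
  have hcomm_inv : P * Mc⁻¹ = Mc⁻¹ * P := hcomm.matrix_inv_right
  refine ⟨hMcP ▸ isMoorePenroseInv_mul_inv_of_commute
    ((isUnit_iff_isUnit_det Mc).mp hMc_posDef.isUnit) hP hPt hcomm, hcomm_inv, ?_⟩
  rw [hcomm_inv, Matrix.mul_assoc, hP]
end

section
/- The matrix S = I − M_c⁻¹ P M is idempotent: S² = S. -/
/-!
Write `Mc = P M P + ν (1 - P)`. Because `P` is idempotent, `Mc P = P M P = P Mc`, so `P` commutes
with `Mc` and hence with `Mc⁻¹`. Then `A = Mc⁻¹ P M` satisfies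
`A² = Mc⁻¹ (P M P) Mc⁻¹ M = Mc⁻¹ (Mc P) Mc⁻¹ M = P Mc⁻¹ M = A`, and `S = 1 - A` is idempotent too.
Invertibility of `Mc` comes from `xᴴ Mc x = (P x)ᴴ M (P x) + ν ‖(1 - P) x‖²`, which is positive
for `x ≠ 0` since `P x` and `(1 - P) x` cannot both vanish.
-/

open Matrix

theorem isIdempotentElem_units_inv_mul_mul {M : Type*} [Monoid M] (u : Mˣ) {p m : M}
    (hcomm : Commute (u : M) p) (hu : ↑u * p = p * m * p) :
    IsIdempotentElem (↑u⁻¹ * p * m) := by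
  have hinv : p * ↑u⁻¹ = ↑u⁻¹ * p := hcomm.units_inv_left.eq.symm
  calc ↑u⁻¹ * p * m * (↑u⁻¹ * p * m) = ↑u⁻¹ * p * m * (p * ↑u⁻¹) * m := by
        rw [hinv]; simp only [mul_assoc]
    _ = ↑u⁻¹ * (↑u * p) * ↑u⁻¹ * m := by rw [hu]; simp only [mul_assoc]
    _ = ↑u⁻¹ * p * m := by rw [Units.inv_mul_cancel_left, hinv]

theorem Matrix.isIdempotentElem_nonsing_inv_mul_mul {n α : Type*} [Fintype n] [DecidableEq n]
    [CommRing α] {A P M : Matrix n n α} (hA : IsUnit A.det) (hcomm : Commute A P)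
    (h : A * P = P * M * P) : IsIdempotentElem (A⁻¹ * P * M) :=
  isIdempotentElem_units_inv_mul_mul (nonsingInvUnit A hA) hcomm h

section Compression

variable {R A : Type*} [CommSemiring R] [Ring A] [Algebra R A] {p : A}

theorem IsIdempotentElem.add_smul_one_sub_mul (hp : IsIdempotentElem p) (m : A) (ν : R) :
    (p * m * p + ν • (1 - p)) * p = p * m * p := by
  rw [add_mul, smul_mul_assoc, hp.one_sub_mul_self, smul_zero, add_zero, mul_assoc, hp.eq]

theorem IsIdempotentElem.mul_add_smul_one_sub (hp : IsIdempotentElem p) (m : A) (ν : R) :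
    p * (p * m * p + ν • (1 - p)) = p * m * p := by
  rw [mul_add, mul_smul_comm, hp.mul_one_sub_self, smul_zero, add_zero, ← mul_assoc, ← mul_assoc,
    hp.eq]

theorem IsIdempotentElem.commute_add_smul_one_sub (hp : IsIdempotentElem p) (m : A) (ν : R) :
    Commute (p * m * p + ν • (1 - p)) p :=
  (hp.add_smul_one_sub_mul m ν).trans (hp.mul_add_smul_one_sub m ν).symm

end Compression

open scoped ComplexOrder in
theorem Matrix.PosDef.mul_mul_add_smul_one_sub {𝕜 n : Type*} [RCLike 𝕜] [Fintype n]
    [DecidableEq n] {M P : Matrix n n 𝕜} (hM : M.PosDef) (hP : IsStarProjection P) {ν : 𝕜}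
    (hν : 0 < ν) : (P * M * P + ν • (1 - P)).PosDef := by
  have hQ := hP.one_sub
  have hconj : P * M * P + ν • (1 - P) = Pᴴ * M * P + ν • ((1 - P)ᴴ * (1 - P)) := by
    rw [← star_eq_conjTranspose, ← star_eq_conjTranspose, hP.isSelfAdjoint.star_eq,
      hQ.isSelfAdjoint.star_eq, hQ.isIdempotentElem.eq]
  rw [hconj]
  have hherm := (hM.posSemidef.conjTranspose_mul_mul_same P).add
    ((posSemidef_conjTranspose_mul_self (1 - P)).smul hν.le) |>.isHermitian
  refine of_dotProduct_mulVec_pos hherm fun x hx => ?_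
  have hquad : star x ⬝ᵥ ((Pᴴ * M * P + ν • ((1 - P)ᴴ * (1 - P))) *ᵥ x) =
      star (P *ᵥ x) ⬝ᵥ (M *ᵥ (P *ᵥ x)) + ν * (star ((1 - P) *ᵥ x) ⬝ᵥ ((1 - P) *ᵥ x)) := by
    simp only [add_mulVec, smul_mulVec, dotProduct_add, dotProduct_smul, smul_eq_mul,
      ← mulVec_mulVec, star_mulVec, dotProduct_mulVec, vecMul_vecMul]
  rw [hquad]
  by_cases hPx : P *ᵥ x = 0
  · have hQx : (1 - P) *ᵥ x = x := by rw [sub_mulVec, hPx, one_mulVec, sub_zero]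
    rw [hPx, hQx, mulVec_zero, dotProduct_zero, zero_add]
    exact mul_pos hν (dotProduct_star_self_pos_iff.mpr hx)
  · exact add_pos_of_pos_of_nonneg (hM.dotProduct_mulVec_pos hPx)
      (mul_nonneg hν.le (dotProduct_star_self_nonneg _))

theorem S_idempotent {n : ℕ}
    (M P : Matrix (Fin n) (Fin n) ℝ) (hM : M.PosDef)
    (hP : P * P = P) (hPt : Pᵀ = P) (ν : ℝ) (hν : 0 < ν)
    (Mc S : Matrix (Fin n) (Fin n) ℝ)
    (hMc : Mc = P * M * P + ν • (1 - P)) (hS : S = 1 - Mc⁻¹ * P * M) :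
    S * S = S := by
  have hProj : IsStarProjection P := ⟨hP, hPt⟩
  have hMc_det : IsUnit Mc.det := by
    rw [hMc]; exact (hM.mul_mul_add_smul_one_sub hProj hν).det_pos.ne'.isUnit
  have hIdem : IsIdempotentElem (Mc⁻¹ * P * M) := by
    refine isIdempotentElem_nonsing_inv_mul_mul hMc_det ?_ ?_ <;> rw [hMc]
    exacts [IsIdempotentElem.commute_add_smul_one_sub hP M ν,
      IsIdempotentElem.add_smul_one_sub_mul hP M ν]
  rw [hS]
  exact hIdem.one_sub
end

section
/- The oblique projector S annihilates P on the right: S P = 0, and equivalently P Sᵀ = 0. -/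
/-!
Since `(I - P) P = 0`, the matrix `M_c` agrees with `P M P` on the range of `P`:
`M_c P = P M P`. Hence `M_c⁻¹ P M P = M_c⁻¹ M_c P = P` and `S P = P - P = 0`; transposing
gives `P Sᵀ = 0`. The only analytic input is that `M_c` is invertible: it is positive
definite, since `xᵀ M_c x = (P x)ᵀ M (P x) + ν ‖(I - P) x‖²` and `P x`, `(I - P) x` cannot
both vanish.
-/

open Matrix

open scoped ComplexOrder

namespace Matrix

variable {l m n : Type*} [Fintype l] [Fintype m] [Fintype n]

theorem PosDef.conjTranspose_mul_mul_add_conjTranspose_mul_mul {R : Type*} [Ring R]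
    [PartialOrder R] [StarRing R] [IsOrderedAddMonoid R] {A : Matrix m m R} {B : Matrix l l R}
    (hA : A.PosDef) (hB : B.PosDef) {U : Matrix m n R} {V : Matrix l n R}
    (hUV : ∀ x, U *ᵥ x = 0 → V *ᵥ x = 0 → x = 0) :
    (Uᴴ * A * U + Vᴴ * B * V).PosDef := by
  refine PosDef.of_dotProduct_mulVec_pos
    ((isHermitian_conjTranspose_mul_mul U hA.1).add (isHermitian_conjTranspose_mul_mul V hB.1))
    fun x hx => ?_
  have hU := (hA.posSemidef.conjTranspose_mul_mul_same U).dotProduct_mulVec_nonneg x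
  have hV := (hB.posSemidef.conjTranspose_mul_mul_same V).dotProduct_mulVec_nonneg x
  rw [add_mulVec, dotProduct_add]
  by_cases hUx : U *ᵥ x = 0
  · have hVx : V *ᵥ x ≠ 0 := fun hVx => hx (hUV x hUx hVx)
    refine add_pos_of_nonneg_of_pos hU ?_
    simpa only [star_mulVec, dotProduct_mulVec, vecMul_vecMul] using hB.dotProduct_mulVec_pos hVx
  · refine add_pos_of_pos_of_nonneg ?_ hV
    simpa only [star_mulVec, dotProduct_mulVec, vecMul_vecMul] using hA.dotProduct_mulVec_pos hUx

variable [DecidableEq n]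

theorem PosDef.mul_mul_add_smul_one_sub_s7 {𝕜 : Type*} [RCLike 𝕜] {M P : Matrix n n 𝕜}
    (hM : M.PosDef) (hP : IsStarProjection P) {ν : ℝ} (hν : 0 < ν) :
    (P * M * P + ν • (1 - P)).PosDef := by
  have hsplit : P * M * P + ν • (1 - P) = Pᴴ * M * P + (1 - P)ᴴ * (ν • 1) * (1 - P) := by
    rw [← star_eq_conjTranspose, ← star_eq_conjTranspose, hP.isSelfAdjoint.star_eq,
      hP.one_sub.isSelfAdjoint.star_eq, mul_smul_comm, mul_one, smul_mul_assoc,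
      hP.one_sub.isIdempotentElem.eq]
  rw [hsplit]
  refine hM.conjTranspose_mul_mul_add_conjTranspose_mul_mul (PosDef.one.smul hν)
    fun x hPx hQx => ?_
  rwa [sub_mulVec, one_mulVec, hPx, sub_zero] at hQx

theorem one_sub_inv_mul_mul_mul_self_eq_zero {α : Type*} [CommRing α] {A M P : Matrix n n α}
    (hA : IsUnit A) (hAP : A * P = P * M * P) : (1 - A⁻¹ * P * M) * P = 0 := by
  rw [sub_mul, one_mul, mul_assoc, mul_assoc, ← mul_assoc P, ← hAP,
    nonsing_inv_mul_cancel_left _ _ (A.isUnit_iff_isUnit_det.mp hA), sub_self]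

end Matrix

theorem S_annihilates_P {n : ℕ}
    (M P : Matrix (Fin n) (Fin n) ℝ) (hM : M.PosDef)
    (hP : P * P = P) (hPt : Pᵀ = P) (ν : ℝ) (hν : 0 < ν)
    (Mc S : Matrix (Fin n) (Fin n) ℝ)
    (hMc : Mc = P * M * P + ν • (1 - P)) (hS : S = 1 - Mc⁻¹ * P * M) :
    S * P = 0 ∧ P * Sᵀ = 0 := by
  have hProj : IsStarProjection P := ⟨hP, by
    rw [IsSelfAdjoint, star_eq_conjTranspose, conjTranspose_eq_transpose_of_trivial, hPt]⟩
  have hMcP : Mc * P = P * M * P := by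
    rw [hMc, add_mul, smul_mul_assoc, hProj.one_sub_mul_self, smul_zero, add_zero, mul_assoc, hP]
  have hSP : S * P = 0 :=
    hS ▸ one_sub_inv_mul_mul_mul_self_eq_zero
      (hMc ▸ (hM.mul_mul_add_smul_one_sub_s7 hProj hν).isUnit) hMcP
  exact ⟨hSP, by rw [← hPt, ← transpose_mul, hSP, transpose_zero]⟩
end

section
/- M − Sᵀ M S is positive semidefinite; equivalently ζᵀ Sᵀ M S ζ ≤ ζᵀ M ζ for every vector ζ. -/
/-!
`M_c` commutes with `P` and `M_c P = P M P`, so `A = M_c⁻¹ P` is symmetric with `A M A = A`.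
Since `S = 1 - A M`, expanding gives `M - Sᵀ M S = M A M = (P M)ᵀ M_c⁻¹ (P M)`, which is positive
semidefinite because `M_c` is positive definite: its quadratic form is
`(P x)ᵀ M (P x) + ν ‖x - P x‖²`.
-/

open Matrix

theorem one_sub_mul_mul_mul_one_sub_mul {R : Type*} [Ring R] {m a : R} (h : a * m * a = a) :
    (1 - m * a) * m * (1 - a * m) = m - m * a * m := by
  calc (1 - m * a) * m * (1 - a * m) = m - m * a * m - m * a * m + m * (a * m * a) * m := by
        noncomm_ring
    _ = m - m * a * m := by rw [h]; abel

namespace Matrix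

variable {ι R : Type*} [Fintype ι]

theorem dotProduct_mulVec_le_of_posSemidef_sub {A B : Matrix ι ι ℝ} (h : (A - B).PosSemidef)
    (x : ι → ℝ) : x ⬝ᵥ (B *ᵥ x) ≤ x ⬝ᵥ (A *ᵥ x) := by
  simpa [sub_mulVec] using h.dotProduct_mulVec_nonneg x

theorem dotProduct_mul_mul_mulVec_of_isSymm [CommRing R] {A B : Matrix ι ι R} (hB : B.IsSymm)
    (x : ι → R) :
    x ⬝ᵥ ((B * A * B) *ᵥ x) = (B *ᵥ x) ⬝ᵥ (A *ᵥ (B *ᵥ x)) := by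
  rw [← mulVec_mulVec, ← mulVec_mulVec, dotProduct_mulVec, ← mulVec_transpose, hB.eq]

variable [DecidableEq ι]

theorem commute_nonsing_inv_left [CommRing R] {A B : Matrix ι ι R} (hA : IsUnit A)
    (h : Commute A B) : Commute A⁻¹ B := by
  obtain ⟨u, rfl⟩ := hA
  rw [← coe_units_inv]
  exact h.units_inv_left

def projectedInertia [CommRing R] (M P : Matrix ι ι R) (ν : R) : Matrix ι ι R :=
  P * M * P + ν • (1 - P)

noncomputable def projectedIteration [CommRing R] (M P : Matrix ι ι R) (ν : R) : Matrix ι ι R :=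
  1 - (projectedInertia M P ν)⁻¹ * P * M

section CommRing

variable [CommRing R] {M P : Matrix ι ι R} {ν : R}

theorem projectedInertia_mul (hP : IsIdempotentElem P) :
    projectedInertia M P ν * P = P * M * P := by
  simp [projectedInertia, add_mul, sub_mul, Matrix.mul_assoc, hP.eq]

theorem mul_projectedInertia (hP : IsIdempotentElem P) :
    P * projectedInertia M P ν = P * M * P := by
  simp [projectedInertia, mul_add, mul_sub, ← Matrix.mul_assoc, hP.eq]

theorem commute_projectedInertia (hP : IsIdempotentElem P) :
    Commute (projectedInertia M P ν) P :=
  (projectedInertia_mul hP).trans (mul_projectedInertia hP).symm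

theorem isSymm_projectedInertia (hM : M.IsSymm) (hP : P.IsSymm) :
    (projectedInertia M P ν).IsSymm := by
  simp [projectedInertia, IsSymm, transpose_mul, hM.eq, hP.eq, Matrix.mul_assoc]

theorem dotProduct_projectedInertia_mulVec (hP : IsIdempotentElem P) (hPt : P.IsSymm)
    (x : ι → R) :
    x ⬝ᵥ (projectedInertia M P ν *ᵥ x) =
      (P *ᵥ x) ⬝ᵥ (M *ᵥ (P *ᵥ x)) + ν * (((1 - P) *ᵥ x) ⬝ᵥ ((1 - P) *ᵥ x)) := by
  have hQx : x ⬝ᵥ ((1 - P) *ᵥ x) = ((1 - P) *ᵥ x) ⬝ᵥ ((1 - P) *ᵥ x) := by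
    have := dotProduct_mul_mul_mulVec_of_isSymm (A := 1) (isSymm_one.sub hPt) x
    rwa [Matrix.mul_one, hP.one_sub.eq, one_mulVec] at this
  rw [projectedInertia, add_mulVec, smul_mulVec, dotProduct_add, dotProduct_smul, smul_eq_mul,
    dotProduct_mul_mul_mulVec_of_isSymm hPt, hQx]

theorem inv_projectedInertia_mul_mul_self (hP : IsIdempotentElem P)
    (hMc : IsUnit (projectedInertia M P ν)) :
    (projectedInertia M P ν)⁻¹ * P * M * ((projectedInertia M P ν)⁻¹ * P) =
      (projectedInertia M P ν)⁻¹ * P := by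
  set N := (projectedInertia M P ν)⁻¹
  have hNP : Commute N P := commute_nonsing_inv_left hMc (commute_projectedInertia hP)
  calc N * P * M * (N * P) = N * P * M * (P * N) := by rw [hNP.eq]
    _ = N * (projectedInertia M P ν * P) * N := by
        rw [projectedInertia_mul hP]; simp only [Matrix.mul_assoc]
    _ = N * projectedInertia M P ν * (P * N) := by simp only [Matrix.mul_assoc]
    _ = N * P := by
        rw [nonsing_inv_mul _ ((isUnit_iff_isUnit_det _).1 hMc), Matrix.one_mul, hNP.eq]

theorem sub_transpose_mul_projectedIteration (hM : M.IsSymm) (hP : IsIdempotentElem P)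
    (hPt : P.IsSymm) (hMc : IsUnit (projectedInertia M P ν)) :
    M - (projectedIteration M P ν)ᵀ * M * projectedIteration M P ν =
      (P * M)ᵀ * (projectedInertia M P ν)⁻¹ * (P * M) := by
  set N := (projectedInertia M P ν)⁻¹
  have hNP : Commute N P := commute_nonsing_inv_left hMc (commute_projectedInertia hP)
  have hN : N.IsSymm := by
    rw [IsSymm, transpose_nonsing_inv, (isSymm_projectedInertia hM hPt).eq]
  have hA : (N * P)ᵀ = N * P := by rw [transpose_mul, hPt.eq, hN.eq, hNP.eq]
  have hS : (projectedIteration M P ν)ᵀ = 1 - M * (N * P) := by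
    rw [projectedIteration, transpose_sub, transpose_one, transpose_mul, hA, hM.eq]
  have hPNP : P * N * P = N * P := by rw [← hNP.eq, Matrix.mul_assoc, hP.eq]
  rw [hS, projectedIteration,
    one_sub_mul_mul_mul_one_sub_mul (inv_projectedInertia_mul_mul_self hP hMc), sub_sub_cancel,
    transpose_mul, hM.eq, hPt.eq, ← hPNP]
  simp only [Matrix.mul_assoc]

end CommRing

section Real

variable {M P : Matrix ι ι ℝ} {ν : ℝ}

theorem posDef_projectedInertia (hM : M.PosDef) (hP : IsIdempotentElem P) (hPt : P.IsSymm)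
    (hν : 0 < ν) : (projectedInertia M P ν).PosDef := by
  have hMc : (projectedInertia M P ν).IsSymm :=
    isSymm_projectedInertia (isHermitian_iff_isSymm.1 hM.isHermitian) hPt
  refine .of_dotProduct_mulVec_pos (isHermitian_iff_isSymm.2 hMc) fun x hx => ?_
  rw [star_trivial, dotProduct_projectedInertia_mulVec hP hPt]
  by_cases hPx : P *ᵥ x = 0
  · have hQx : (1 - P) *ᵥ x = x := by rw [sub_mulVec, hPx, one_mulVec, sub_zero]
    rw [hPx, hQx, mulVec_zero, dotProduct_zero, zero_add]
    exact mul_pos hν (by simpa using dotProduct_star_self_pos_iff.2 hx)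
  · exact add_pos_of_pos_of_nonneg (by simpa using hM.dotProduct_mulVec_pos hPx)
      (mul_nonneg hν.le (by simpa using dotProduct_star_self_nonneg ((1 - P) *ᵥ x)))

end Real

end Matrix

theorem M_sub_projected_inertia_posSemidef {n : ℕ}
    (M P : Matrix (Fin n) (Fin n) ℝ) (hM : M.PosDef)
    (hP : P * P = P) (hPt : Pᵀ = P) (ν : ℝ) (hν : 0 < ν)
    (Mc S : Matrix (Fin n) (Fin n) ℝ)
    (hMc : Mc = P * M * P + ν • (1 - P)) (hS : S = 1 - Mc⁻¹ * P * M) :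
    (M - Sᵀ * M * S).PosSemidef ∧
      ∀ ζ : Fin n → ℝ, ζ ⬝ᵥ ((Sᵀ * M * S) *ᵥ ζ) ≤ ζ ⬝ᵥ (M *ᵥ ζ) := by
  obtain rfl : Mc = projectedInertia M P ν := hMc
  obtain rfl : S = projectedIteration M P ν := hS
  have hMc := posDef_projectedInertia hM hP hPt hν
  have hPSD : (M - (projectedIteration M P ν)ᵀ * M * projectedIteration M P ν).PosSemidef := by
    rw [sub_transpose_mul_projectedIteration (isHermitian_iff_isSymm.1 hM.isHermitian) hP hPt
      hMc.isUnit]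
    simpa using hMc.inv.posSemidef.conjTranspose_mul_mul_same (P * M)
  exact ⟨hPSD, dotProduct_mulVec_le_of_posSemidef_sub hPSD⟩
end

section
/- For the impact law q̇⁺ = q̇⁻ − (e+1) S q̇⁻ with restitution coefficient 0 ≤ e ≤ 1, the post-impact kinetic energy never exceeds the pre-impact kinetic energy: ½(q̇⁺)ᵀ M q̇⁺ − ½(q̇⁻)ᵀ M q̇⁻ = −½(1 − e²)(q̇⁻)ᵀ Sᵀ M S q̇⁻ ≤ 0. -/
open Matrix

theorem impact_energy_loss {n : ℕ}
    (M S : Matrix (Fin n) (Fin n) ℝ) (hM : M.PosDef)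
    (hS : S * S = S) (hMS : M * S = Sᵀ * M) (hMS' : Sᵀ * M = Sᵀ * M * S)
    (e : ℝ) (he0 : 0 ≤ e) (he1 : e ≤ 1)
    (qm qp : Fin n → ℝ) (hqp : qp = qm - (e + 1) • (S *ᵥ qm)) :
    (1 / 2) * (qp ⬝ᵥ (M *ᵥ qp)) - (1 / 2) * (qm ⬝ᵥ (M *ᵥ qm)) =
      -(1 / 2) * (1 - e ^ 2) * (qm ⬝ᵥ ((Sᵀ * M * S) *ᵥ qm)) ∧
    (1 / 2) * (qp ⬝ᵥ (M *ᵥ qp)) - (1 / 2) * (qm ⬝ᵥ (M *ᵥ qm)) ≤ 0 := by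
  set v := S *ᵥ qm with hv
  have hMsym : Mᵀ = M := hM.1
  -- qm ⬝ᵥ (M *ᵥ v) = v ⬝ᵥ (M *ᵥ v)
  have h1 : qm ⬝ᵥ (M *ᵥ v) = v ⬝ᵥ (M *ᵥ v) := by
    calc qm ⬝ᵥ (M *ᵥ v) = qm ⬝ᵥ ((Sᵀ * M * S) *ᵥ qm) := by
            rw [hv, mulVec_mulVec, hMS]; conv_lhs => rw [hMS']
      _ = (S *ᵥ qm) ⬝ᵥ ((M * S) *ᵥ qm) := by
            rw [Matrix.mul_assoc, ← mulVec_mulVec, dotProduct_mulVec, vecMul_transpose]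
      _ = v ⬝ᵥ (M *ᵥ v) := by rw [hv, mulVec_mulVec]
  have h2 : v ⬝ᵥ (M *ᵥ qm) = v ⬝ᵥ (M *ᵥ v) := by
    rw [dotProduct_mulVec, show v ᵥ* M = M *ᵥ v by rw [← vecMul_transpose, hMsym],
      dotProduct_comm, h1]
  have h3 : qm ⬝ᵥ ((Sᵀ * M * S) *ᵥ qm) = v ⬝ᵥ (M *ᵥ v) := by
    rw [Matrix.mul_assoc, ← mulVec_mulVec, ← mulVec_mulVec, ← hv,
      dotProduct_mulVec, vecMul_transpose, ← hv]
  have hx : 0 ≤ v ⬝ᵥ (M *ᵥ v) := hM.posSemidef.re_dotProduct_nonneg v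
  have key : (1 / 2) * (qp ⬝ᵥ (M *ᵥ qp)) - (1 / 2) * (qm ⬝ᵥ (M *ᵥ qm)) =
      -(1 / 2) * (1 - e ^ 2) * (v ⬝ᵥ (M *ᵥ v)) := by
    rw [hqp]
    simp only [mulVec_sub, mulVec_smul, dotProduct_sub, sub_dotProduct,
      dotProduct_smul, smul_dotProduct, smul_eq_mul, h1, h2]
    ring
  refine ⟨by rw [key, h3], ?_⟩
  rw [key]
  have : 0 ≤ 1 - e ^ 2 := by nlinarith
  nlinarith
end

section
/- The kinetic energy ratio γ = K⁺/K⁻ for the impact law q̇⁺ = q̇⁻ − (e+1)S q̇⁻ satisfies 0 ≤ γ ≤ 1 whenever e ∈ [0,1]; here γ = 1 − (1−e²)·((q̇⁻)ᵀ Sᵀ M S q̇⁻)/((q̇⁻)ᵀ M q̇⁻). -/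
/-!
Since `Sᵀ M = Sᵀ M S` and `M` is symmetric, the cross terms of `(1 - S)ᵀ M (1 - S)` cancel,
so `M - Sᵀ M S = (1 - S)ᵀ M (1 - S)` is positive semidefinite. Hence the quadratic form
`a = q̇ᵀ Sᵀ M S q̇` lies in `[0, b]` with `b = q̇ᵀ M q̇ > 0`, and `γ = 1 - (1 - e²) a / b`
lies in `[0, 1]` because `1 - e² ∈ [0, 1]`.
-/

open Matrix

namespace Matrix

variable {ι : Type*} [Fintype ι] [DecidableEq ι]

theorem one_sub_transpose_mul_mul_one_sub {M S : Matrix ι ι ℝ} (hM : M.IsSymm)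
    (hMS : Sᵀ * M = Sᵀ * M * S) :
    (1 - S)ᵀ * M * (1 - S) = M - Sᵀ * M * S := by
  have hMS_right : M * S = Sᵀ * M * S :=
    calc M * S = (Sᵀ * M)ᵀ := by rw [transpose_mul, hM.eq, transpose_transpose]
      _ = (Sᵀ * M * S)ᵀ := congrArg transpose hMS
      _ = Sᵀ * M * S := by rw [transpose_mul, transpose_mul, hM.eq, transpose_transpose, mul_assoc]
  simp only [transpose_sub, transpose_one, sub_mul, mul_sub, one_mul, mul_one]
  rw [hMS_right, ← hMS]
  abel

theorem PosSemidef.sub_transpose_mul_mul_self {M S : Matrix ι ι ℝ} (hM : M.PosSemidef)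
    (hMS : Sᵀ * M = Sᵀ * M * S) : (M - Sᵀ * M * S).PosSemidef := by
  rw [← one_sub_transpose_mul_mul_one_sub (isHermitian_iff_isSymm.mp hM.isHermitian) hMS,
    ← conjTranspose_eq_transpose_of_trivial]
  exact hM.conjTranspose_mul_mul_same _

theorem PosSemidef.dotProduct_transpose_mul_mul_mulVec_mem_Icc {M S : Matrix ι ι ℝ}
    (hM : M.PosSemidef) (hMS : Sᵀ * M = Sᵀ * M * S) (x : ι → ℝ) :
    x ⬝ᵥ ((Sᵀ * M * S) *ᵥ x) ∈ Set.Icc 0 (x ⬝ᵥ (M *ᵥ x)) := by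
  have hSMS := hM.conjTranspose_mul_mul_same S
  have hdiff := hM.sub_transpose_mul_mul_self hMS
  rw [conjTranspose_eq_transpose_of_trivial] at hSMS
  constructor
  · simpa using hSMS.dotProduct_mulVec_nonneg x
  · simpa [sub_mulVec] using hdiff.dotProduct_mulVec_nonneg x

end Matrix

theorem one_sub_mul_div_mem_Icc {t a b : ℝ} (ht : t ∈ Set.Icc 0 1) (ha : a ∈ Set.Icc 0 b)
    (hb : 0 < b) : 1 - t * a / b ∈ Set.Icc 0 1 := by
  have hta : t * a ≤ b := by nlinarith [ht.1, ht.2, ha.1, ha.2]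
  constructor
  · rwa [sub_nonneg, div_le_one hb]
  · have := div_nonneg (mul_nonneg ht.1 ha.1) hb.le
    linarith

theorem energy_ratio_bounds_general {n : ℕ}
    (M S : Matrix (Fin n) (Fin n) ℝ) (hM : M.PosDef)
    (hMS' : Sᵀ * M = Sᵀ * M * S)
    (e : ℝ) (he0 : 0 ≤ e) (he1 : e ≤ 1)
    (qm : Fin n → ℝ) (hqm : qm ≠ 0)
    (γ : ℝ)
    (hγ : γ = 1 - (1 - e ^ 2) * (qm ⬝ᵥ ((Sᵀ * M * S) *ᵥ qm)) / (qm ⬝ᵥ (M *ᵥ qm))) :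
    0 ≤ γ ∧ γ ≤ 1 := by
  have hrestitution : 1 - e ^ 2 ∈ Set.Icc (0 : ℝ) 1 := ⟨by nlinarith, by nlinarith⟩
  have hkinetic : 0 < qm ⬝ᵥ (M *ᵥ qm) := by simpa using hM.dotProduct_mulVec_pos hqm
  rw [hγ]
  exact one_sub_mul_div_mem_Icc hrestitution
    (hM.posSemidef.dotProduct_transpose_mul_mul_mulVec_mem_Icc hMS' qm) hkinetic

theorem energy_ratio_bounds {n : ℕ}
    (M S : Matrix (Fin n) (Fin n) ℝ) (hM : M.PosDef)
    (hS : S * S = S) (hMS : M * S = Sᵀ * M) (hMS' : Sᵀ * M = Sᵀ * M * S)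
    (e : ℝ) (he0 : 0 ≤ e) (he1 : e ≤ 1)
    (qm : Fin n → ℝ) (hqm : qm ≠ 0)
    (γ : ℝ)
    (hγ : γ = 1 - (1 - e ^ 2) * (qm ⬝ᵥ ((Sᵀ * M * S) *ᵥ qm)) / (qm ⬝ᵥ (M *ᵥ qm))) :
    0 ≤ γ ∧ γ ≤ 1 :=
  energy_ratio_bounds_general M S hM hMS' e he0 he1 qm hqm γ hγ
end

section
/- Given symmetric positive semidefinite matrices Q and E with Q = Gᵀ M G for M symmetric positive definite, the quadratic matrix inequality E Q E − Q ⪯ 0 holds if and only if the block matrix [[Gᵀ M G, E Gᵀ],[G E, M⁻¹]] is positive semidefinite. -/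
open Matrix

theorem Matrix.PosDef.fromBlocks₂₂_inv {m n K : Type*} [Finite m] [Fintype n]
    [DecidableEq n] [Field K] [PartialOrder K] [StarRing K] [StarOrderedRing K]
    (A : Matrix m m K) (B : Matrix m n K) {M : Matrix n n K} (hM : M.PosDef) :
    (fromBlocks A B Bᴴ M⁻¹).PosSemidef ↔ (A - B * M * Bᴴ).PosSemidef := by
  have : Invertible M⁻¹ := hM.inv.isUnit.invertible
  rw [PosDef.fromBlocks₂₂ A B hM.inv,
    nonsing_inv_nonsing_inv M (M.isUnit_iff_isUnit_det.mp hM.isUnit)]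

theorem qmi_iff_lmi {m k : ℕ}
    (M : Matrix (Fin m) (Fin m) ℝ) (hM : M.PosDef)
    (G : Matrix (Fin m) (Fin k) ℝ)
    (Q : Matrix (Fin k) (Fin k) ℝ) (hQ : Q = Gᵀ * M * G)
    (E : Matrix (Fin k) (Fin k) ℝ) (hE : E.PosSemidef) :
    (Q - E * Q * E).PosSemidef ↔
      (Matrix.fromBlocks (Gᵀ * M * G) (E * Gᵀ) (G * E) M⁻¹).PosSemidef := by
  have hGE : G * E = (E * Gᵀ)ᴴ := by
    rw [conjTranspose_mul, hE.isHermitian.eq, conjTranspose_eq_transpose_of_trivial,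
      transpose_transpose]
  rw [hGE, hM.fromBlocks₂₂_inv, ← hGE, hQ]
  simp only [Matrix.mul_assoc]
end
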